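/- arXiv:1604.05706 — 4 statements merged into one kernel-verified Lean document; each statement's English description precedes it below -/
import Mathlib

section
/- (A posteriori error bound, Proposition 1.) Let T > 0 and X = ℝ^d with canonical inner product ⟨·,·⟩_X and norm ‖·‖_X. Let V : [0, T] → ℝ^{d×r} be continuously differentiable with V(t)ᵀ V(t) = I_r for all t, and set Π(t) = V(t) V(t)ᵀ. Let f : X × [0, T] → X be continuous, let u : [0, T] → X be continuously differentiable with u′(t) = f(u(t), t), and let α : [0, T] → ℝ^r be continuously differentiable such that u_r(t) = V(t) α(t) satisfies the Galerkin condition Π(t) u_r′(t) = Π(t) f(u_r(t), t) for all t. Let L : [0, T] → ℝ be continuous such that for all t ∈ [0, T] and all w ∈ X, ⟨w − u_r(t), f(w, t) − f(u_r(t), t)⟩_X ≤ L(t) ‖w − u_r(t)‖_X², and define the residual r(t) = (I_d − Π(t)) (V′(t) V(t)ᵀ u_r(t) − f(u_r(t), t)). Then for all t ∈ [0, T], ‖u(t) − u_r(t)‖_X ≤ e^{Γ(t)} (‖u(0) − u_r(0)‖_X + ∫₀ᵗ e^{−Γ(τ)} ‖r(τ)‖_X dτ), where Γ(t) = ∫₀ᵗ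 L(τ) dτ. -/
open RealInnerProductSpace

attribute [local instance] Matrix.normedAddCommGroup Matrix.normedSpace

/-!
Write `e = u - u_r`. Differentiating the identity `u_r = V Vᵀ u_r` shows that the part of
`u_r'` orthogonal to the reduced space is `(I - Π) V' Vᵀ u_r`; together with the Galerkin
condition this gives `u_r' - f(u_r) = r`, hence `e' = (f(u) - f(u_r)) - r`. The logarithmic
Lipschitz bound then yields `⟪e, e'⟫ ≤ (L ‖e‖ + ‖r‖) ‖e‖`, i.e. the right Dini derivative of `‖e‖`
is at most `L ‖e‖ + ‖r‖`, and a Grönwall comparison with the solution of `Δ' = L Δ + ‖r‖`,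
`Δ(0) = ‖e(0)‖`, finishes the proof.
-/

open Set Filter Topology Real

theorem ContinuousOn.hasDerivWithinAt_integral_Icc {E : Type*} [NormedAddCommGroup E]
    [NormedSpace ℝ E] [CompleteSpace E] {f : ℝ → E} {a b x : ℝ} (hf : ContinuousOn f (Icc a b))
    (hx : x ∈ Icc a b) : HasDerivWithinAt (fun u => ∫ t in a..u, f t) (f x) (Icc a b) x :=
  have : Fact (x ∈ Icc a b) := ⟨hx⟩
  intervalIntegral.integral_hasDerivWithinAt_right
    ((hf.mono (Icc_subset_Icc_right hx.2)).intervalIntegrable_of_Icc hx.1)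
    (hf.stronglyMeasurableAtFilter_nhdsWithin measurableSet_Icc x) (hf x hx)

noncomputable def linearODESolution (L ρ : ℝ → ℝ) (a δ x : ℝ) : ℝ :=
  exp (∫ s in a..x, L s) * (δ + ∫ τ in a..x, exp (-(∫ s in a..τ, L s)) * ρ τ)

section LinearODE

variable {L ρ : ℝ → ℝ} {a b : ℝ}

theorem linearODESolution_self (δ : ℝ) : linearODESolution L ρ a δ a = δ := by
  simp [linearODESolution]

theorem hasDerivWithinAt_linearODESolution (hL : ContinuousOn L (Icc a b))
    (hρ : ContinuousOn ρ (Icc a b)) (δ : ℝ) {x : ℝ} (hx : x ∈ Icc a b) :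
    HasDerivWithinAt (linearODESolution L ρ a δ) (L x * linearODESolution L ρ a δ x + ρ x)
      (Icc a b) x := by
  have hΓ : ∀ y ∈ Icc a b, HasDerivWithinAt (fun y => ∫ s in a..y, L s) (L y) (Icc a b) y :=
    fun y hy => hL.hasDerivWithinAt_integral_Icc hy
  have hw : ContinuousOn (fun τ => exp (-(∫ s in a..τ, L s)) * ρ τ) (Icc a b) :=
    (ContinuousOn.rexp fun y hy => (hΓ y hy).continuousWithinAt.neg).mul hρ
  have h : HasDerivWithinAt (linearODESolution L ρ a δ)
      (exp (∫ s in a..x, L s) * L x * (δ + ∫ τ in a..x, exp (-(∫ s in a..τ, L s)) * ρ τ) +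
        exp (∫ s in a..x, L s) * (exp (-(∫ s in a..x, L s)) * ρ x)) (Icc a b) x :=
    (hΓ x hx).exp.mul ((hw.hasDerivWithinAt_integral_Icc hx).const_add δ)
  refine h.congr_deriv ?_
  rw [← mul_assoc, ← exp_add, add_neg_cancel, exp_zero, linearODESolution]
  ring

theorem le_linearODESolution_of_liminf_slope_right_le {g : ℝ → ℝ} (hg : ContinuousOn g (Icc a b))
    (hL : ContinuousOn L (Icc a b)) (hρ : ContinuousOn ρ (Icc a b))
    (hg' : ∀ x ∈ Ico a b, ∀ r, L x * g x + ρ x < r → ∃ᶠ z in 𝓝[>] x, slope g x z < r) :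
    ∀ x ∈ Icc a b, g x ≤ linearODESolution L ρ a (g a) x := by
  set B := linearODESolution L ρ a (g a)
  set E : ℝ → ℝ := fun x => exp ((∫ s in a..x, L s) + x)
  have hE : ∀ x ∈ Icc a b, HasDerivWithinAt E (E x * (L x + 1)) (Icc a b) x := fun x hx =>
    ((hL.hasDerivWithinAt_integral_Icc hx).add (hasDerivWithinAt_id x _)).exp
  -- `B + ε E` is a strict supersolution, so `g` cannot cross it
  have hstrict : ∀ ε > 0, ∀ x ∈ Icc a b, g x ≤ B x + ε * E x := by
    intro ε hε
    have hBε : ∀ x ∈ Icc a b, HasDerivWithinAt (fun y => B y + ε * E y)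
        (L x * (B x + ε * E x) + ρ x + ε * E x) (Icc a b) x := fun x hx => by
      refine ((hasDerivWithinAt_linearODESolution hL hρ (g a) hx).add
        ((hE x hx).const_mul ε)).congr_deriv ?_
      ring
    refine image_le_of_liminf_slope_right_lt_deriv_boundary' hg hg' ?_
      (fun x hx => (hBε x hx).continuousWithinAt)
      (fun x hx => (hBε x (Ico_subset_Icc_self hx)).mono_of_mem_nhdsWithin
        (Icc_mem_nhdsGE_of_mem hx)) ?_
    · have := exp_pos ((∫ s in a..a, L s) + a)
      simp only [B, linearODESolution_self]
      nlinarith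
    · intro x _ hgx
      have := exp_pos ((∫ s in a..x, L s) + x)
      rw [hgx]
      nlinarith
  intro x hx
  refine le_of_forall_pos_le_add fun δ hδ => ?_
  have hEx : 0 < E x := exp_pos _
  simpa [div_mul_cancel₀ _ hEx.ne'] using hstrict (δ / E x) (by positivity) x hx

end LinearODE

section NormSlope

variable {E : Type*} [NormedAddCommGroup E] [InnerProductSpace ℝ E] {e : ℝ → E} {e' : E} {x : ℝ}

theorem HasDerivWithinAt.norm {s : Set ℝ} (he : HasDerivWithinAt e e' s x) (hx : e x ≠ 0) :
    HasDerivWithinAt (fun t => ‖e t‖) (⟪e x, e'⟫ / ‖e x‖) s x := by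
  have h := he.norm_sq.sqrt (by positivity)
  simp only [sqrt_sq (norm_nonneg _)] at h
  exact h.congr_deriv (by ring)

theorem HasDerivWithinAt.frequently_slope_norm_lt {K ρ r : ℝ} (he : HasDerivWithinAt e e' (Ici x) x)
    (hinner : ⟪e x, e'⟫ ≤ (K * ‖e x‖ + ρ) * ‖e x‖) (hzero : e x = 0 → ‖e'‖ ≤ ρ)
    (hr : K * ‖e x‖ + ρ < r) : ∃ᶠ z in 𝓝[>] x, slope (fun t => ‖e t‖) x z < r := by
  by_cases hx : e x = 0
  · rw [hx, norm_zero, mul_zero, zero_add] at hr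
    simpa only [slope, vsub_eq_sub, smul_eq_mul] using
      he.liminf_right_slope_norm_le ((hzero hx).trans_lt hr)
  · have hpos : 0 < ‖e x‖ := norm_pos_iff.mpr hx
    refine (he.norm hx).liminf_right_slope_le ?_
    rw [div_lt_iff₀ hpos]
    nlinarith

end NormSlope

theorem sub_eq_sub_sub_of_galerkin {R E F : Type*} [Semiring R] [AddCommGroup E] [Module R E]
    [AddCommGroup F] [Module R F] (V : F →ₗ[R] E) (W : E →ₗ[R] F) (hWV : ∀ c, W (V c) = c)
    {x' w a : E} {c : F} (hx' : x' = a + V c) (hGal : V (W x') = V (W w)) :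
    x' - w = (a - w) - V (W (a - w)) := by
  rw [hx', map_add, map_add, hWV] at hGal
  rw [hx', map_sub, map_sub, ← hGal]
  abel

section MatrixCalculus

open Matrix

variable {m n : Type*} [Fintype m] [Fintype n] {s : Set ℝ} {t : ℝ}

theorem HasDerivWithinAt.matrix_transpose {A : ℝ → Matrix m n ℝ} {A' : Matrix m n ℝ}
    (hA : HasDerivWithinAt A A' s t) : HasDerivWithinAt (fun τ => (A τ)ᵀ) A'ᵀ s t :=
  (LinearMap.toContinuousLinearMap (transposeLinearEquiv m n ℝ ℝ).toLinearMap).hasFDerivAt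
    |>.comp_hasDerivWithinAt t hA

variable [DecidableEq n]

noncomputable def Matrix.toEuclideanLinCLM :
    Matrix m n ℝ →L[ℝ] EuclideanSpace ℝ n →L[ℝ] EuclideanSpace ℝ m :=
  LinearMap.toContinuousLinearMap
    (LinearMap.toContinuousLinearMap.toLinearMap ∘ₗ toEuclideanLin.toLinearMap)

theorem HasDerivWithinAt.toEuclideanLin_apply {A : ℝ → Matrix m n ℝ} {A' : Matrix m n ℝ}
    {x : ℝ → EuclideanSpace ℝ n} {x' : EuclideanSpace ℝ n}
    (hA : HasDerivWithinAt A A' s t) (hx : HasDerivWithinAt x x' s t) :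
    HasDerivWithinAt (fun τ => toEuclideanLin (A τ) (x τ))
      (toEuclideanLin A' (x t) + toEuclideanLin (A t) x') s t :=
  ((toEuclideanLinCLM (m := m) (n := n)).hasFDerivAt.comp_hasDerivWithinAt t hA).clm_apply hx

@[fun_prop]
theorem ContinuousOn.toEuclideanLin_apply {A : ℝ → Matrix m n ℝ} {x : ℝ → EuclideanSpace ℝ n}
    (hA : ContinuousOn A s) (hx : ContinuousOn x s) :
    ContinuousOn (fun τ => toEuclideanLin (A τ) (x τ)) s :=
  ((toEuclideanLinCLM (m := m) (n := n)).continuous.comp_continuousOn hA).clm_apply hx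

theorem HasDerivWithinAt.eq_of_projection_fixed [DecidableEq m] {V : ℝ → Matrix m n ℝ}
    {V' : Matrix m n ℝ} {x : ℝ → EuclideanSpace ℝ m} {x' : EuclideanSpace ℝ m}
    (hV : HasDerivWithinAt V V' s t) (hx : HasDerivWithinAt x x' s t)
    (hs : UniqueDiffWithinAt ℝ s t) (ht : t ∈ s)
    (hfix : ∀ τ ∈ s, toEuclideanLin (V τ) (toEuclideanLin (V τ)ᵀ (x τ)) = x τ) :
    x' = toEuclideanLin V' (toEuclideanLin (V t)ᵀ (x t)) +
      toEuclideanLin (V t) (toEuclideanLin V'ᵀ (x t) + toEuclideanLin (V t)ᵀ x') :=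
  hs.eq_deriv _ hx <|
    (hV.toEuclideanLin_apply (hV.matrix_transpose.toEuclideanLin_apply hx)).congr_of_mem
      (fun τ hτ => (hfix τ hτ).symm) ht

end MatrixCalculus

section GalerkinResidual

open Matrix

variable {m n : Type*} [Fintype m] [Fintype n] [DecidableEq m] [DecidableEq n]

noncomputable def galerkinResidual (V V' : Matrix m n ℝ) (x w : EuclideanSpace ℝ m) :
    EuclideanSpace ℝ m :=
  toEuclideanLin (1 - V * Vᵀ) (toEuclideanLin (V' * Vᵀ) x - w)

theorem toEuclideanLin_transpose_comp_self_apply {V : Matrix m n ℝ} (hV : Vᵀ * V = 1)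
    (c : EuclideanSpace ℝ n) : toEuclideanLin Vᵀ (toEuclideanLin V c) = c := by
  rw [← LinearMap.comp_apply, ← toLpLin_mul_same, hV, toLpLin_one, LinearMap.id_apply]

theorem galerkinResidual_eq (V V' : Matrix m n ℝ) (x w : EuclideanSpace ℝ m) :
    galerkinResidual V V' x w = (toEuclideanLin V' (toEuclideanLin Vᵀ x) - w) -
      toEuclideanLin V (toEuclideanLin Vᵀ (toEuclideanLin V' (toEuclideanLin Vᵀ x) - w)) := by
  simp only [galerkinResidual, toLpLin_mul_same, map_sub, toLpLin_one, LinearMap.sub_apply,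
    LinearMap.id_apply, LinearMap.comp_apply]
  abel

theorem sub_eq_galerkinResidual {V V' : Matrix m n ℝ} (hV : Vᵀ * V = 1)
    {x x' w : EuclideanSpace ℝ m} {c : EuclideanSpace ℝ n}
    (hx' : x' = toEuclideanLin V' (toEuclideanLin Vᵀ x) + toEuclideanLin V c)
    (hGal : toEuclideanLin (V * Vᵀ) x' = toEuclideanLin (V * Vᵀ) w) :
    x' - w = galerkinResidual V V' x w := by
  rw [toLpLin_mul_same] at hGal
  rw [galerkinResidual_eq]
  exact sub_eq_sub_sub_of_galerkin _ _ (toEuclideanLin_transpose_comp_self_apply hV) hx' hGal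

theorem ContinuousOn.galerkinResidual {s : Set ℝ} {V V' : ℝ → Matrix m n ℝ}
    {x w : ℝ → EuclideanSpace ℝ m} (hV : ContinuousOn V s) (hV' : ContinuousOn V' s)
    (hx : ContinuousOn x s) (hw : ContinuousOn w s) :
    ContinuousOn (fun t => galerkinResidual (V t) (V' t) (x t) (w t)) s := by
  have hVt : ContinuousOn (fun t => (V t)ᵀ) s :=
    continuous_id.matrix_transpose.comp_continuousOn hV
  simp only [galerkinResidual_eq]
  fun_prop

end GalerkinResidual

theorem stmt_3_general (d r : ℕ) (T : ℝ) (hT : 0 < T)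
    (V V' : ℝ → Matrix (Fin d) (Fin r) ℝ)
    (hV : ∀ t ∈ Set.Icc (0:ℝ) T, HasDerivWithinAt V (V' t) (Set.Icc 0 T) t)
    (hV' : ContinuousOn V' (Set.Icc 0 T))
    (horth : ∀ t ∈ Set.Icc (0:ℝ) T, (V t).transpose * V t = 1)
    (f : EuclideanSpace ℝ (Fin d) → ℝ → EuclideanSpace ℝ (Fin d))
    (hf : ContinuousOn (fun p : EuclideanSpace ℝ (Fin d) × ℝ => f p.1 p.2)
      (Set.univ ×ˢ Set.Icc 0 T))
    (u : ℝ → EuclideanSpace ℝ (Fin d))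
    (hu : ∀ t ∈ Set.Icc (0:ℝ) T, HasDerivWithinAt u (f (u t) t) (Set.Icc 0 T) t)
    (α : ℝ → EuclideanSpace ℝ (Fin r))
    (ur ur' : ℝ → EuclideanSpace ℝ (Fin d))
    (hur : ∀ t, ur t = Matrix.toEuclideanLin (V t) (α t))
    (hurd : ∀ t ∈ Set.Icc (0:ℝ) T, HasDerivWithinAt ur (ur' t) (Set.Icc 0 T) t)
    (hGal : ∀ t ∈ Set.Icc (0:ℝ) T,
      Matrix.toEuclideanLin (V t * (V t).transpose) (ur' t) =
        Matrix.toEuclideanLin (V t * (V t).transpose) (f (ur t) t))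
    (L : ℝ → ℝ) (hL : ContinuousOn L (Set.Icc 0 T))
    (hlog : ∀ t ∈ Set.Icc (0:ℝ) T, ∀ w : EuclideanSpace ℝ (Fin d),
      ⟪w - ur t, f w t - f (ur t) t⟫ ≤ L t * ‖w - ur t‖ ^ 2)
    (res : ℝ → EuclideanSpace ℝ (Fin d))
    (hres : ∀ t, res t = Matrix.toEuclideanLin (1 - V t * (V t).transpose)
      (Matrix.toEuclideanLin (V' t * (V t).transpose) (ur t) - f (ur t) t)) :
    ∀ t ∈ Set.Icc (0:ℝ) T,
      ‖u t - ur t‖ ≤ Real.exp (∫ τ in (0:ℝ)..t, L τ) *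
        (‖u 0 - ur 0‖ +
          ∫ τ in (0:ℝ)..t, Real.exp (-(∫ s in (0:ℝ)..τ, L s)) * ‖res τ‖) := by
  have hfix : ∀ τ ∈ Icc (0:ℝ) T,
      Matrix.toEuclideanLin (V τ) (Matrix.toEuclideanLin (V τ).transpose (ur τ)) = ur τ :=
    fun τ hτ => by rw [hur, toEuclideanLin_transpose_comp_self_apply (horth τ hτ)]
  have hdefect : ∀ t ∈ Icc (0:ℝ) T, ur' t - f (ur t) t = res t := fun t ht =>
    (hres t).symm ▸ sub_eq_galerkinResidual (horth t ht)
      ((hV t ht).eq_of_projection_fixed (hurd t ht) (uniqueDiffOn_Icc hT t ht) ht hfix) (hGal t ht)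
  have hur_cont : ContinuousOn ur (Icc 0 T) := fun t ht => (hurd t ht).continuousWithinAt
  have hres_cont : ContinuousOn res (Icc 0 T) :=
    (ContinuousOn.galerkinResidual (fun t ht => (hV t ht).continuousWithinAt) hV' hur_cont
      (hf.comp (hur_cont.prodMk continuousOn_id) fun t ht => ⟨trivial, ht⟩)).congr
        fun t _ => hres t
  refine le_linearODESolution_of_liminf_slope_right_le (g := fun t => ‖u t - ur t‖)
    (ρ := fun t => ‖res t‖) (ContinuousOn.norm (.sub (fun t ht => (hu t ht).continuousWithinAt)
      hur_cont)) hL hres_cont.norm fun x hx q hq => ?_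
  have hxI := Ico_subset_Icc_self hx
  have hsplit : f (u x) x - ur' x = (f (u x) x - f (ur x) x) - res x := by
    rw [← hdefect x hxI]; abel
  refine (((hu x hxI).fun_sub (hurd x hxI)).mono_of_mem_nhdsWithin (Icc_mem_nhdsGE_of_mem hx)
    |>.frequently_slope_norm_lt ?_ (fun h0 => ?_) hq)
  · have hres_inner := neg_le_of_abs_le (abs_real_inner_le_norm (u x - ur x) (res x))
    rw [hsplit, inner_sub_right]
    linarith [hlog x hxI (u x)]
  · rw [hsplit, sub_eq_zero.mp h0, sub_self, zero_sub, norm_neg]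

/-- A posteriori error bound (Proposition 1): if `u′ = f(u, t)`, `u_r(t) = V(t) α(t)`
satisfies the Galerkin condition `Π(t) u_r′(t) = Π(t) f(u_r(t), t)` with
`Π(t) = V(t) V(t)ᵀ`, `V(t)ᵀ V(t) = I_r`, and `L(t)` bounds the local logarithmic
Lipschitz constant of `f(·, t)` at `u_r(t)`, then
`‖u(t) − u_r(t)‖ ≤ e^{Γ(t)} (‖u(0) − u_r(0)‖ + ∫₀ᵗ e^{−Γ(τ)} ‖r(τ)‖ dτ)` where
`Γ(t) = ∫₀ᵗ L(τ) dτ` and `r(t) = (I − Π(t)) (V′(t) V(t)ᵀ u_r(t) − f(u_r(t), t))`. -/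
theorem stmt_3 (d r : ℕ) (T : ℝ) (hT : 0 < T)
    (V V' : ℝ → Matrix (Fin d) (Fin r) ℝ)
    (hV : ∀ t ∈ Set.Icc (0:ℝ) T, HasDerivWithinAt V (V' t) (Set.Icc 0 T) t)
    (hV' : ContinuousOn V' (Set.Icc 0 T))
    (horth : ∀ t ∈ Set.Icc (0:ℝ) T, (V t).transpose * V t = 1)
    (f : EuclideanSpace ℝ (Fin d) → ℝ → EuclideanSpace ℝ (Fin d))
    (hf : ContinuousOn (fun p : EuclideanSpace ℝ (Fin d) × ℝ => f p.1 p.2)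
      (Set.univ ×ˢ Set.Icc 0 T))
    (u : ℝ → EuclideanSpace ℝ (Fin d))
    (hu : ∀ t ∈ Set.Icc (0:ℝ) T, HasDerivWithinAt u (f (u t) t) (Set.Icc 0 T) t)
    (α α' : ℝ → EuclideanSpace ℝ (Fin r))
    (hα : ∀ t ∈ Set.Icc (0:ℝ) T, HasDerivWithinAt α (α' t) (Set.Icc 0 T) t)
    (hα' : ContinuousOn α' (Set.Icc 0 T))
    (ur ur' : ℝ → EuclideanSpace ℝ (Fin d))
    (hur : ∀ t, ur t = Matrix.toEuclideanLin (V t) (α t))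
    (hurd : ∀ t ∈ Set.Icc (0:ℝ) T, HasDerivWithinAt ur (ur' t) (Set.Icc 0 T) t)
    (hGal : ∀ t ∈ Set.Icc (0:ℝ) T,
      Matrix.toEuclideanLin (V t * (V t).transpose) (ur' t) =
        Matrix.toEuclideanLin (V t * (V t).transpose) (f (ur t) t))
    (L : ℝ → ℝ) (hL : ContinuousOn L (Set.Icc 0 T))
    (hlog : ∀ t ∈ Set.Icc (0:ℝ) T, ∀ w : EuclideanSpace ℝ (Fin d),
      ⟪w - ur t, f w t - f (ur t) t⟫ ≤ L t * ‖w - ur t‖ ^ 2)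
    (res : ℝ → EuclideanSpace ℝ (Fin d))
    (hres : ∀ t, res t = Matrix.toEuclideanLin (1 - V t * (V t).transpose)
      (Matrix.toEuclideanLin (V' t * (V t).transpose) (ur t) - f (ur t) t)) :
    ∀ t ∈ Set.Icc (0:ℝ) T,
      ‖u t - ur t‖ ≤ Real.exp (∫ τ in (0:ℝ)..t, L τ) *
        (‖u 0 - ur 0‖ +
          ∫ τ in (0:ℝ)..t, Real.exp (-(∫ s in (0:ℝ)..τ, L s)) * ‖res τ‖) :=
  stmt_3_general d r T hT V V' hV hV' horth f hf u hu α ur ur' hur hurd hGal L hL hlog res hres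
end

section
/- Let T > 0 and let V : [0, T] → ℝ^{d×r} be differentiable with V(t)ᵀ V(t) = I_r for all t ∈ [0, T]; set Π(t) = V(t) V(t)ᵀ. Let α : [0, T] → ℝ^r be differentiable, set u_r(t) = V(t) α(t), and let w : [0, T] → ℝ^d be such that Π(t) u_r′(t) = Π(t) w(t) for all t. Then for all t ∈ [0, T], u_r′(t) = Π(t) w(t) + (I_d − Π(t)) V′(t) α(t). -/
attribute [local instance] Matrix.normedAddCommGroup Matrix.normedSpace

lemma toEL_mul {d r e : ℕ} (A : Matrix (Fin d) (Fin e) ℝ) (B : Matrix (Fin e) (Fin r) ℝ)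
    (v : EuclideanSpace ℝ (Fin r)) :
    Matrix.toEuclideanLin (A * B) v = Matrix.toEuclideanLin A (Matrix.toEuclideanLin B v) := by
  simp [Matrix.toEuclideanLin_apply, Matrix.mulVec_mulVec]

/-- If `u_r(t) = V(t) α(t)` with `V(t)ᵀ V(t) = I_r` and `Π(t) u_r′(t) = Π(t) w(t)` where
`Π(t) = V(t) V(t)ᵀ`, then `u_r′(t) = Π(t) w(t) + (I − Π(t)) V′(t) α(t)`. -/
theorem stmt_7 (d r : ℕ) (T : ℝ) (hT : 0 < T)
    (V V' : ℝ → Matrix (Fin d) (Fin r) ℝ)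
    (hV : ∀ t ∈ Set.Icc (0:ℝ) T, HasDerivWithinAt V (V' t) (Set.Icc 0 T) t)
    (horth : ∀ t ∈ Set.Icc (0:ℝ) T, (V t).transpose * V t = 1)
    (α α' : ℝ → EuclideanSpace ℝ (Fin r))
    (hα : ∀ t ∈ Set.Icc (0:ℝ) T, HasDerivWithinAt α (α' t) (Set.Icc 0 T) t)
    (ur ur' : ℝ → EuclideanSpace ℝ (Fin d))
    (hur : ∀ t, ur t = Matrix.toEuclideanLin (V t) (α t))
    (hurd : ∀ t ∈ Set.Icc (0:ℝ) T, HasDerivWithinAt ur (ur' t) (Set.Icc 0 T) t)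
    (w : ℝ → EuclideanSpace ℝ (Fin d))
    (hGal : ∀ t ∈ Set.Icc (0:ℝ) T,
      Matrix.toEuclideanLin (V t * (V t).transpose) (ur' t) =
        Matrix.toEuclideanLin (V t * (V t).transpose) (w t)) :
    ∀ t ∈ Set.Icc (0:ℝ) T,
      ur' t = Matrix.toEuclideanLin (V t * (V t).transpose) (w t) +
        Matrix.toEuclideanLin (1 - V t * (V t).transpose)
          (Matrix.toEuclideanLin (V' t) (α t)) := by
  intro t ht
  set s := Set.Icc (0:ℝ) T
  -- the linear map M ↦ toEuclideanLin M as a CLM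
  let L : Matrix (Fin d) (Fin r) ℝ →L[ℝ]
      (EuclideanSpace ℝ (Fin r) →L[ℝ] EuclideanSpace ℝ (Fin d)) :=
    LinearMap.toContinuousLinearMap
      ((LinearMap.toContinuousLinearMap :
          (EuclideanSpace ℝ (Fin r) →ₗ[ℝ] EuclideanSpace ℝ (Fin d)) ≃ₗ[ℝ] _).toLinearMap.comp
        Matrix.toEuclideanLin.toLinearMap)
  have hc : HasDerivWithinAt (fun t => L (V t)) (L (V' t)) s t :=
    L.hasFDerivAt.comp_hasDerivWithinAt t (hV t ht)
  have hprod : HasDerivWithinAt (fun t => L (V t) (α t))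
      (L (V' t) (α t) + L (V t) (α' t)) s t := hc.clm_apply (hα t ht)
  have hfun : (fun t => L (V t) (α t)) = ur := by
    funext u; rw [hur u]; rfl
  rw [hfun] at hprod
  have hun : UniqueDiffWithinAt ℝ s t := (uniqueDiffOn_Icc hT) t ht
  have key : ur' t = Matrix.toEuclideanLin (V' t) (α t) + Matrix.toEuclideanLin (V t) (α' t) := by
    have := hun.eq_deriv _ (hurd t ht) hprod
    exact this
  -- algebra
  have hPV : V t * (V t).transpose * V t = V t := by
    rw [Matrix.mul_assoc, horth t ht, Matrix.mul_one]
  have hsub : ∀ v : EuclideanSpace ℝ (Fin d),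
      Matrix.toEuclideanLin (1 - V t * (V t).transpose) v
        = v - Matrix.toEuclideanLin (V t * (V t).transpose) v := by
    intro v; simp [map_sub, Matrix.toEuclideanLin_apply, Matrix.sub_mulVec]
  rw [hsub, ← hGal t ht, key]
  have h1 : Matrix.toEuclideanLin (V t * (V t).transpose)
      (Matrix.toEuclideanLin (V' t) (α t) + Matrix.toEuclideanLin (V t) (α' t))
      = Matrix.toEuclideanLin (V t * (V t).transpose) (Matrix.toEuclideanLin (V' t) (α t))
        + Matrix.toEuclideanLin (V t) (α' t) := by
    rw [map_add, ← toEL_mul (V t * (V t).transpose) (V t) (α' t), hPV]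
  rw [h1]
  abel
end

section
/- (Interpolation property of the Galerkin reduced model.) Let T > 0, let V : [0, T] → ℝ^{d×r} be continuously differentiable with V(t)ᵀ V(t) = I_r for all t, and let f : ℝ^d × [0, T] → ℝ^d be continuous and such that there exists L_f ≥ 0 with ‖f(x, t) − f(y, t)‖ ≤ L_f ‖x − y‖ for all x, y ∈ ℝ^d and t ∈ [0, T]. Let u : [0, T] → ℝ^d be continuously differentiable with u′(t) = f(u(t), t) and suppose that u(t) lies in the column span of V(t) for all t ∈ [0, T], i.e. V(t) V(t)ᵀ u(t) = u(t). If α : [0, T] → ℝ^r is continuously differentiable and satisfies the reduced system α′(t) = V(t)ᵀ f(V(t) α(t), t) − V(t)ᵀ V′(t) α(t) with initial condition α(0) = V(0)ᵀ u(0), then V(t) α(t) = u(t) for all t ∈ [0, T]. -/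
attribute [local instance] Matrix.normedAddCommGroup Matrix.normedSpace

/-!
Put `β(t) := V(t)ᵀ u(t)`. Since `u = Vβ`, we get `β′ = V′ᵀ u + Vᵀ f(u) = V′ᵀ V β + Vᵀ f(Vβ)`,
and differentiating `VᵀV = I` gives `V′ᵀ V = −Vᵀ V′`; hence `β` solves the reduced system with
the same initial value as `α`. On the compact time interval the reduced right-hand side is
Lipschitz in the state uniformly in time, so the two solutions coincide by uniqueness for
Lipschitz ODEs, and `Vα = Vβ = VVᵀu = u`.
-/

open Set

open scoped NNReal

section Galerkin

variable {E F : Type*} [NormedAddCommGroup E] [NormedSpace ℝ E]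
  [NormedAddCommGroup F] [NormedSpace ℝ F]

/-- For `P = V`, `P' = V′` and `Q = Vᵀ` this is the Galerkin right-hand side
`Vᵀ f(Vα, t) − Vᵀ V′ α`. -/
def galerkinField (P P' : ℝ → F →L[ℝ] E) (Q : ℝ → E →L[ℝ] F) (f : E → ℝ → E) (t : ℝ)
    (a : F) : F :=
  Q t (f (P t a) t) - Q t (P' t a)

theorem comp_add_comp_eq_zero_of_comp_eq_id {P : ℝ → F →L[ℝ] E} {Q : ℝ → E →L[ℝ] F}
    {P' : F →L[ℝ] E} {Q' : E →L[ℝ] F} {s : Set ℝ} {t : ℝ} (hs : UniqueDiffWithinAt ℝ s t)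
    (ht : t ∈ s) (hP : HasDerivWithinAt P P' s t) (hQ : HasDerivWithinAt Q Q' s t)
    (hQP : ∀ τ ∈ s, Q τ ∘L P τ = ContinuousLinearMap.id ℝ F) :
    Q' ∘L P t + Q t ∘L P' = 0 :=
  hs.eq_deriv _ (hQ.clm_comp hP) <|
    (hasDerivWithinAt_const t s (ContinuousLinearMap.id ℝ F)).congr hQP (hQP t ht)

theorem hasDerivWithinAt_galerkinField_of_mem_range {P : ℝ → F →L[ℝ] E} {Q : ℝ → E →L[ℝ] F}
    {P' : ℝ → F →L[ℝ] E} {Q' : E →L[ℝ] F} {f : E → ℝ → E} {u : ℝ → E} {s : Set ℝ} {t : ℝ}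
    (hQ : HasDerivWithinAt Q Q' s t) (hu : HasDerivWithinAt u (f (u t) t) s t)
    (hskew : Q' ∘L P t + Q t ∘L P' t = 0) (hspan : P t (Q t (u t)) = u t) :
    HasDerivWithinAt (fun τ ↦ Q τ (u τ)) (galerkinField P P' Q f t (Q t (u t))) s t := by
  have hQ'u : Q' (u t) = -Q t (P' t (Q t (u t))) := by
    have h := congrArg (· (Q t (u t))) hskew
    simp only [add_apply, ContinuousLinearMap.comp_apply, hspan, zero_apply] at h
    exact eq_neg_of_add_eq_zero_left h
  convert hQ.clm_apply hu using 1
  rw [galerkinField, hspan, hQ'u]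
  abel

theorem lipschitzWith_galerkinField {P P' : ℝ → F →L[ℝ] E} {Q : ℝ → E →L[ℝ] F}
    {f : E → ℝ → E} {K : ℝ≥0} {t : ℝ} (hf : LipschitzWith K (f · t)) :
    LipschitzWith (‖Q t‖₊ * K * ‖P t‖₊ + ‖Q t ∘L P' t‖₊) (galerkinField P P' Q f t) :=
  (((Q t).lipschitz.comp hf).comp (P t).lipschitz).sub (Q t ∘L P' t).lipschitz

theorem exists_lipschitzWith_galerkinField_of_continuousOn {P P' : ℝ → F →L[ℝ] E}
    {Q : ℝ → E →L[ℝ] F} {f : E → ℝ → E} {K : ℝ≥0} {s : Set ℝ} (hs : IsCompact s)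
    (hP : ContinuousOn P s) (hP' : ContinuousOn P' s) (hQ : ContinuousOn Q s)
    (hf : ∀ t ∈ s, LipschitzWith K (f · t)) :
    ∃ L : ℝ≥0, ∀ t ∈ s, LipschitzWith L (galerkinField P P' Q f t) := by
  obtain ⟨C, hC⟩ := hs.exists_bound_of_continuousOn
    (f := fun t ↦ ‖Q t‖ * K * ‖P t‖ + ‖Q t ∘L P' t‖) (by fun_prop)
  refine ⟨C.toNNReal, fun t ht ↦ (lipschitzWith_galerkinField (hf t ht)).weaken ?_⟩
  rw [← NNReal.coe_le_coe, Real.coe_toNNReal']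
  exact (le_abs_self _).trans ((hC t ht).trans (le_max_left _ _))

theorem eqOn_Icc_of_hasDerivWithinAt_of_lipschitzWith {v : ℝ → F → F} {K : ℝ≥0} {a b : ℝ}
    {α β : ℝ → F} (hv : ∀ t ∈ Icc a b, LipschitzWith K (v t))
    (hα : ∀ t ∈ Icc a b, HasDerivWithinAt α (v t (α t)) (Icc a b) t)
    (hβ : ∀ t ∈ Icc a b, HasDerivWithinAt β (v t (β t)) (Icc a b) t) (h₀ : α a = β a) :
    EqOn α β (Icc a b) := by
  have toIci {γ : ℝ → F} (hγ : ∀ t ∈ Icc a b, HasDerivWithinAt γ (v t (γ t)) (Icc a b) t)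
      (t : ℝ) (ht : t ∈ Ico a b) : HasDerivWithinAt γ (v t (γ t)) (Ici t) t :=
    (hγ t (Ico_subset_Icc_self ht)).mono_of_mem_nhdsWithin (Icc_mem_nhdsGE_of_mem ht)
  exact ODE_solution_unique_of_mem_Icc_right (s := fun _ ↦ univ)
    (fun t ht ↦ (hv t (Ico_subset_Icc_self ht)).lipschitzOnWith)
    (fun t ht ↦ (hα t ht).continuousWithinAt) (toIci hα) (fun _ _ ↦ trivial)
    (fun t ht ↦ (hβ t ht).continuousWithinAt) (toIci hβ) (fun _ _ ↦ trivial) h₀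

theorem galerkin_solution_eq_of_mem_range {a b : ℝ} (hab : a < b)
    {P P' : ℝ → F →L[ℝ] E} {Q Q' : ℝ → E →L[ℝ] F} {f : E → ℝ → E} {K : ℝ≥0}
    {u : ℝ → E} {α : ℝ → F}
    (hP : ∀ t ∈ Icc a b, HasDerivWithinAt P (P' t) (Icc a b) t)
    (hP' : ContinuousOn P' (Icc a b))
    (hQ : ∀ t ∈ Icc a b, HasDerivWithinAt Q (Q' t) (Icc a b) t)
    (hQP : ∀ t ∈ Icc a b, Q t ∘L P t = ContinuousLinearMap.id ℝ F)
    (hf : ∀ t ∈ Icc a b, LipschitzWith K (f · t))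
    (hu : ∀ t ∈ Icc a b, HasDerivWithinAt u (f (u t) t) (Icc a b) t)
    (hspan : ∀ t ∈ Icc a b, P t (Q t (u t)) = u t)
    (hα : ∀ t ∈ Icc a b, HasDerivWithinAt α (galerkinField P P' Q f t (α t)) (Icc a b) t)
    (hα₀ : α a = Q a (u a)) :
    ∀ t ∈ Icc a b, P t (α t) = u t := by
  set β : ℝ → F := fun t ↦ Q t (u t)
  have hβ : ∀ t ∈ Icc a b, HasDerivWithinAt β (galerkinField P P' Q f t (β t)) (Icc a b) t :=
    fun t ht ↦ hasDerivWithinAt_galerkinField_of_mem_range (hQ t ht) (hu t ht)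
      (comp_add_comp_eq_zero_of_comp_eq_id (uniqueDiffOn_Icc hab t ht) ht (hP t ht) (hQ t ht)
        hQP) (hspan t ht)
  obtain ⟨L, hL⟩ := exists_lipschitzWith_galerkinField_of_continuousOn isCompact_Icc
    (fun t ht ↦ (hP t ht).continuousWithinAt) hP' (fun t ht ↦ (hQ t ht).continuousWithinAt) hf
  have hαβ : EqOn α β (Icc a b) := eqOn_Icc_of_hasDerivWithinAt_of_lipschitzWith hL hα hβ hα₀
  intro t ht
  rw [hαβ ht, hspan t ht]

end Galerkin

section Matrix

open Matrix

variable {l m n : Type*} [Fintype l] [Fintype m] [Fintype n]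

noncomputable def euclideanCLM [DecidableEq n] :
    Matrix m n ℝ →L[ℝ] EuclideanSpace ℝ n →L[ℝ] EuclideanSpace ℝ m :=
  LinearMap.toContinuousLinearMap
    (LinearMap.toContinuousLinearMap.toLinearMap ∘ₗ toEuclideanLin.toLinearMap)

@[simp]
theorem euclideanCLM_apply [DecidableEq n] (A : Matrix m n ℝ) (x : EuclideanSpace ℝ n) :
    euclideanCLM A x = toEuclideanLin A x :=
  rfl

theorem euclideanCLM_mul [DecidableEq m] [DecidableEq n] (A : Matrix l m ℝ) (B : Matrix m n ℝ) :
    euclideanCLM (A * B) = euclideanCLM A ∘L euclideanCLM B := by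
  ext1 x
  simp

theorem euclideanCLM_one [DecidableEq n] :
    euclideanCLM (1 : Matrix n n ℝ) = ContinuousLinearMap.id ℝ _ := by
  ext1 x
  simp

theorem hasDerivWithinAt_euclideanCLM [DecidableEq n] {V : ℝ → Matrix m n ℝ}
    {V' : Matrix m n ℝ} {s : Set ℝ} {t : ℝ} (hV : HasDerivWithinAt V V' s t) :
    HasDerivWithinAt (fun τ ↦ euclideanCLM (V τ)) (euclideanCLM V') s t :=
  (euclideanCLM (m := m) (n := n)).hasFDerivAt.comp_hasDerivWithinAt t hV

theorem hasDerivWithinAt_euclideanCLM_transpose [DecidableEq m] {V : ℝ → Matrix m n ℝ}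
    {V' : Matrix m n ℝ} {s : Set ℝ} {t : ℝ} (hV : HasDerivWithinAt V V' s t) :
    HasDerivWithinAt (fun τ ↦ euclideanCLM (V τ)ᵀ) (euclideanCLM V'ᵀ) s t :=
  (euclideanCLM ∘L LinearMap.toContinuousLinearMap
    (transposeLinearEquiv m n ℝ ℝ).toLinearMap).hasFDerivAt.comp_hasDerivWithinAt t hV

end Matrix

theorem stmt_10_general (d r : ℕ) (T : ℝ) (hT : 0 < T)
    (V V' : ℝ → Matrix (Fin d) (Fin r) ℝ)
    (hV : ∀ t ∈ Set.Icc (0:ℝ) T, HasDerivWithinAt V (V' t) (Set.Icc 0 T) t)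
    (hV' : ContinuousOn V' (Set.Icc 0 T))
    (horth : ∀ t ∈ Set.Icc (0:ℝ) T, (V t).transpose * V t = 1)
    (f : EuclideanSpace ℝ (Fin d) → ℝ → EuclideanSpace ℝ (Fin d))
    (Lf : ℝ) (hLf : 0 ≤ Lf)
    (hflip : ∀ (x y : EuclideanSpace ℝ (Fin d)), ∀ t ∈ Set.Icc (0:ℝ) T,
      ‖f x t - f y t‖ ≤ Lf * ‖x - y‖)
    (u : ℝ → EuclideanSpace ℝ (Fin d))
    (hu : ∀ t ∈ Set.Icc (0:ℝ) T, HasDerivWithinAt u (f (u t) t) (Set.Icc 0 T) t)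
    (hspan : ∀ t ∈ Set.Icc (0:ℝ) T,
      Matrix.toEuclideanLin (V t * (V t).transpose) (u t) = u t)
    (α : ℝ → EuclideanSpace ℝ (Fin r))
    (hα : ∀ t ∈ Set.Icc (0:ℝ) T,
      HasDerivWithinAt α
        (Matrix.toEuclideanLin (V t).transpose
            (f (Matrix.toEuclideanLin (V t) (α t)) t) -
          Matrix.toEuclideanLin ((V t).transpose * V' t) (α t))
        (Set.Icc 0 T) t)
    (hα0 : α 0 = Matrix.toEuclideanLin (V 0).transpose (u 0)) :
    ∀ t ∈ Set.Icc (0:ℝ) T, Matrix.toEuclideanLin (V t) (α t) = u t :=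
  galerkin_solution_eq_of_mem_range hT (P := fun t ↦ euclideanCLM (V t))
    (Q := fun t ↦ euclideanCLM (V t).transpose) (K := ⟨Lf, hLf⟩)
    (fun t ht ↦ hasDerivWithinAt_euclideanCLM (hV t ht))
    (euclideanCLM.continuous.comp_continuousOn hV')
    (fun t ht ↦ hasDerivWithinAt_euclideanCLM_transpose (hV t ht))
    (fun t ht ↦ by rw [← euclideanCLM_mul, horth t ht, euclideanCLM_one])
    (fun t ht ↦ LipschitzWith.of_dist_le_mul fun x y ↦ by
      rw [dist_eq_norm, dist_eq_norm]
      exact hflip x y t ht)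
    hu (fun t ht ↦ by simpa using hspan t ht)
    (fun t ht ↦ by simpa [galerkinField] using hα t ht) hα0

/-- Interpolation property of the Galerkin reduced model: if the full-order trajectory
`u` lies in the column span of `V(t)` for all `t`, and `α` solves the reduced system
`α′ = V(t)ᵀ f(V(t)α, t) − V(t)ᵀ V′(t) α` with `α(0) = V(0)ᵀ u(0)`, then
`V(t) α(t) = u(t)` on `[0, T]`. -/
theorem stmt_10 (d r : ℕ) (T : ℝ) (hT : 0 < T)
    (V V' : ℝ → Matrix (Fin d) (Fin r) ℝ)
    (hV : ∀ t ∈ Set.Icc (0:ℝ) T, HasDerivWithinAt V (V' t) (Set.Icc 0 T) t)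
    (hV' : ContinuousOn V' (Set.Icc 0 T))
    (horth : ∀ t ∈ Set.Icc (0:ℝ) T, (V t).transpose * V t = 1)
    (f : EuclideanSpace ℝ (Fin d) → ℝ → EuclideanSpace ℝ (Fin d))
    (hf : ContinuousOn (fun p : EuclideanSpace ℝ (Fin d) × ℝ => f p.1 p.2)
      (Set.univ ×ˢ Set.Icc 0 T))
    (Lf : ℝ) (hLf : 0 ≤ Lf)
    (hflip : ∀ (x y : EuclideanSpace ℝ (Fin d)), ∀ t ∈ Set.Icc (0:ℝ) T,
      ‖f x t - f y t‖ ≤ Lf * ‖x - y‖)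
    (u : ℝ → EuclideanSpace ℝ (Fin d))
    (hu : ∀ t ∈ Set.Icc (0:ℝ) T, HasDerivWithinAt u (f (u t) t) (Set.Icc 0 T) t)
    (hspan : ∀ t ∈ Set.Icc (0:ℝ) T,
      Matrix.toEuclideanLin (V t * (V t).transpose) (u t) = u t)
    (α : ℝ → EuclideanSpace ℝ (Fin r))
    (hα : ∀ t ∈ Set.Icc (0:ℝ) T,
      HasDerivWithinAt α
        (Matrix.toEuclideanLin (V t).transpose
            (f (Matrix.toEuclideanLin (V t) (α t)) t) -
          Matrix.toEuclideanLin ((V t).transpose * V' t) (α t))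
        (Set.Icc 0 T) t)
    (hα0 : α 0 = Matrix.toEuclideanLin (V 0).transpose (u 0)) :
    ∀ t ∈ Set.Icc (0:ℝ) T, Matrix.toEuclideanLin (V t) (α t) = u t :=
  stmt_10_general d r T hT V V' hV hV' horth f Lf hLf hflip u hu hspan α hα hα0
end

section
/- Let V_k, V_{k+1} ∈ ℝ^{d×r} with V_{k+1}ᵀ V_{k+1} = I_r, set Π_{k+1} = V_{k+1} V_{k+1}ᵀ, let A ∈ ℝ^{d×d}, b ∈ ℝ^d, δt > 0, α_k ∈ ℝ^r, and set u_k = V_k α_k. Suppose u_{k+1} ∈ ℝ^d satisfies the projected semi-implicit step u_{k+1} = Π_{k+1} (u_k + δt (A u_{k+1} + b)). Then u_{k+1} = V_{k+1} α_{k+1} where α_{k+1} = V_{k+1}ᵀ u_{k+1}, and α_{k+1} satisfies the reduced discrete system (I_r − δt V_{k+1}ᵀ A V_{k+1}) α_{k+1} = α_k + δt V_{k+1}ᵀ (b − ((V_{k+1} − V_k)/δt) α_k). -/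
/-- The projected semi-implicit step `u_{k+1} = Π_{k+1} (u_k + δt (A u_{k+1} + b))` with
`Π_{k+1} = V_{k+1} V_{k+1}ᵀ`, `V_{k+1}ᵀ V_{k+1} = I_r`, is equivalent to the reduced
discrete system
`(I_r − δt V_{k+1}ᵀ A V_{k+1}) α_{k+1} = α_k + δt V_{k+1}ᵀ (b − ((V_{k+1} − V_k)/δt) α_k)`
for `α_{k+1} = V_{k+1}ᵀ u_{k+1}`, and `u_{k+1} = V_{k+1} α_{k+1}`. -/
theorem stmt_15 (d r : ℕ) (Vk Vk1 : Matrix (Fin d) (Fin r) ℝ)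
    (horth : Vk1.transpose * Vk1 = 1)
    (A : Matrix (Fin d) (Fin d) ℝ) (b : Fin d → ℝ) (δt : ℝ) (hδt : 0 < δt)
    (αk : Fin r → ℝ) (uk : Fin d → ℝ) (huk : uk = Vk.mulVec αk)
    (uk1 : Fin d → ℝ)
    (hstep : uk1 = (Vk1 * Vk1.transpose).mulVec (uk + δt • (A.mulVec uk1 + b))) :
    uk1 = Vk1.mulVec (Vk1.transpose.mulVec uk1) ∧
      ((1 : Matrix (Fin r) (Fin r) ℝ) - δt • (Vk1.transpose * A * Vk1)).mulVec
          (Vk1.transpose.mulVec uk1) =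
        αk + δt • Vk1.transpose.mulVec (b - (δt⁻¹ • (Vk1 - Vk)).mulVec αk) := by
  have hproj : ∀ w : Fin d → ℝ,
      Vk1.transpose.mulVec ((Vk1 * Vk1.transpose).mulVec w) = Vk1.transpose.mulVec w := by
    intro w
    rw [Matrix.mulVec_mulVec, ← Matrix.mul_assoc, horth, Matrix.one_mul]
  have h1 : Vk1.transpose.mulVec uk1
      = Vk1.transpose.mulVec (uk + δt • (A.mulVec uk1 + b)) := by
    conv_lhs => rw [hstep]
    exact hproj _
  have hu : uk1 = Vk1.mulVec (Vk1.transpose.mulVec uk1) := by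
    rw [h1, Matrix.mulVec_mulVec]
    conv_lhs => rw [hstep]
  refine ⟨hu, ?_⟩
  -- expand everything
  have hαk : Vk1.transpose.mulVec uk = (Vk1.transpose * Vk).mulVec αk := by
    rw [huk, Matrix.mulVec_mulVec]
  have key : Vk1.transpose.mulVec uk1
      = (Vk1.transpose * Vk).mulVec αk
        + δt • ((Vk1.transpose * A).mulVec uk1 + Vk1.transpose.mulVec b) := by
    rw [h1, Matrix.mulVec_add, Matrix.mulVec_smul, Matrix.mulVec_add, hαk,
      Matrix.mulVec_mulVec]
  have hVVα : Vk1.transpose.mulVec (Vk1.mulVec αk) = αk := by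
    rw [Matrix.mulVec_mulVec, horth, Matrix.one_mulVec]
  rw [Matrix.sub_mulVec, Matrix.smul_mulVec, Matrix.one_mulVec,
    Matrix.mul_assoc, ← Matrix.mulVec_mulVec, ← Matrix.mulVec_mulVec, ← hu,
    Matrix.mulVec_sub, Matrix.smul_mulVec, Matrix.mulVec_smul, Matrix.sub_mulVec,
    Matrix.mulVec_sub, hVVα, Matrix.mulVec_mulVec, key,
    smul_sub, smul_sub, smul_sub, smul_smul, smul_smul, mul_inv_cancel₀ hδt.ne', one_smul,
    smul_add, Matrix.mulVec_mulVec]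
  module
end
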